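/- For two different nodes x_i and x_j in the Koch network K_g, with labels {i_0, i_1, …, i_{n_i}} and {j_0, j_1, …, j_{n_j}} respectively (where i_0 = j_0 = 0), the diagonal entries of the pseudoinverse L†(g) compare as follows: (1) if n_i > n_j then L†_{x_i x_i}(g) > L†_{x_j x_j}(g); (2) if n_i < n_j then L†_{x_i x_i}(g) < L†_{x_j x_j}(g); (3) if n_i = n_j and there exists an index z with 0 ≤ z ≤ n_i such that i_l = j_l for l = 0,1,…,z−1 but i_z ≠ j_z, then L†_{x_i x_i}(g) > L†_{x_j x_j}(g) if i_z > j_z, and L†_{x_i x_i}(g) < L†_{x_j x_j}(g) if i_z < j_z; (4) if n_i = n_j and i_l = j_l for all l = 0,1,…,n_i, then L†_{x_i x_i}(g) = L†_{x_j x_j}(g). -/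

import Mathlib

open Matrix BigOperators

/-- The triangles of the Koch network `K_g`: the initial triangle, plus, at each
iteration, one new triangle for each corner node of each existing triangle. -/
def KochT : ℕ → Type
  | 0 => Unit
  | g + 1 => KochT g ⊕ (KochT g × Fin 3)

/-- The vertices of the Koch network `K_g`: at each iteration, each corner node of
each existing triangle spawns two new vertices. -/
def KochV : ℕ → Type
  | 0 => Fin 3
  | g + 1 => KochV g ⊕ (KochT g × Fin 3 × Fin 2)

instance kochTFintype : ∀ g, Fintype (KochT g)
  | 0 => inferInstanceAs (Fintype Unit)
  | g + 1 =>
    letI := kochTFintype g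
    inferInstanceAs (Fintype (KochT g ⊕ (KochT g × Fin 3)))

instance kochVFintype : ∀ g, Fintype (KochV g)
  | 0 => inferInstanceAs (Fintype (Fin 3))
  | g + 1 =>
    letI := kochVFintype g
    letI := kochTFintype g
    inferInstanceAs (Fintype (KochV g ⊕ (KochT g × Fin 3 × Fin 2)))

instance kochTDecEq : ∀ g, DecidableEq (KochT g)
  | 0 => inferInstanceAs (DecidableEq Unit)
  | g + 1 =>
    letI := kochTDecEq g
    inferInstanceAs (DecidableEq (KochT g ⊕ (KochT g × Fin 3)))

instance kochVDecEq : ∀ g, DecidableEq (KochV g)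
  | 0 => inferInstanceAs (DecidableEq (Fin 3))
  | g + 1 =>
    letI := kochVDecEq g
    letI := kochTDecEq g
    inferInstanceAs (DecidableEq (KochV g ⊕ (KochT g × Fin 3 × Fin 2)))

/-- The three corners of a triangle of `K_g`.  For a triangle created at some
iteration and attached to corner `i` of triangle `t`, corner `0` is the mother node
(corner `i` of `t`) and corners `1`, `2` are the two newly created nodes. -/
def kochCorner : ∀ g, KochT g → Fin 3 → KochV g
  | 0, _, c => c
  | g + 1, Sum.inl t, c => Sum.inl (kochCorner g t c)
  | g + 1, Sum.inr (t, i), c =>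
    if c = 0 then Sum.inl (kochCorner g t i)
    else if c = 1 then Sum.inr (t, i, 0) else Sum.inr (t, i, 1)

/-- The Koch network `K_g` as a simple graph: two vertices are adjacent iff they
are distinct corners of a common triangle. -/
def kochGraph (g : ℕ) : SimpleGraph (KochV g) :=
  SimpleGraph.fromRel (fun x y => ∃ (t : KochT g) (c c' : Fin 3),
    c ≠ c' ∧ x = kochCorner g t c ∧ y = kochCorner g t c')

/-- The level of a node of `K_g`: the iteration at which it was created.  The three
initial nodes (the hubs) are at level `0`. -/
def kochLevel : ∀ g, KochV g → ℕ
  | 0, _ => 0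
  | g + 1, Sum.inl x => kochLevel g x
  | g + 1, Sum.inr _ => g + 1

/-- The parent (mother node) of a node of `K_g`; the hubs have no parent. -/
def kochParent : ∀ g, KochV g → Option (KochV g)
  | 0, _ => none
  | g + 1, Sum.inl x => (kochParent g x).map Sum.inl
  | g + 1, Sum.inr (t, i, _) => some (Sum.inl (kochCorner g t i))

/-- The label `{0, i_1, …, i_n}` of a node of `K_g`: the increasing list of levels of
the nodes on the unique shortest path from the nearest hub to the node.  A hub has
label `[0]`; a node created at iteration `g+1` appends `g+1` to its mother's label. -/
def kochLabel : ∀ g, KochV g → List ℕ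
  | 0, _ => [0]
  | g + 1, Sum.inl x => kochLabel g x
  | g + 1, Sum.inr (t, i, _) => kochLabel g (kochCorner g t i) ++ [g + 1]

/-- The all-ones matrix `J`. -/
def JMat (V : Type*) : Matrix V V ℝ := Matrix.of fun _ _ => (1 : ℝ)

/-- The Laplacian matrix (over `ℝ`) of a simple graph (all edge weights `1`). -/
noncomputable def glap {V : Type*} [Fintype V] (G : SimpleGraph V) : Matrix V V ℝ := by
  classical exact SimpleGraph.lapMatrix ℝ G

/-- The pseudoinverse `L† = (L + (1/N)·J)⁻¹ - (1/N)·J` of the graph Laplacian. -/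
noncomputable def gdag {V : Type*} [Fintype V] [DecidableEq V] (G : SimpleGraph V) : Matrix V V ℝ :=
  (glap G + ((Fintype.card V : ℝ))⁻¹ • JMat V)⁻¹ - ((Fintype.card V : ℝ))⁻¹ • JMat V

/-- The resistance distance `r_{xy} = L†_{xx} + L†_{yy} - 2 L†_{xy}`. -/
noncomputable def gres {V : Type*} [Fintype V] [DecidableEq V] (G : SimpleGraph V) (x y : V) : ℝ :=
  gdag G x x + gdag G y y - 2 * gdag G x y

/-!
Write `d` for the distance of `K_g`, `N = 2·4^g + 1` and `D x = ∑_y d(x, y)`. Because `K_g` is a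
tree of triangles, every neighbour of `x` is one step further from `y` than `x`, except the two
neighbours in the triangle through which a shortest path leaves `x` towards `y`, which lie at
distances `d(x, y) - 1` and `d(x, y)`. Hence `L d = (3 - deg) 1ᵀ - 3 I`, and together with `L 1 = 0`
this shows `(L + J/N)⁻¹ = J/N - (d - D 1ᵀ/N - 1 Dᵀ/N + (∑ D)/N² J)/3`. So
`L†_{xx} = 2 D x / (3N) - const`, and the diagonal of `L†` is ordered like `D`.

Following the construction, `D x + 2 ∑_{k ∈ label x} 4^(g-k) = (g + 2 + 2 |label x|) 4^g`. Labels
are strictly increasing, so in this weighted sum each term dominates all later ones together;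
hence a longer label, or a lexicographically larger one, has a larger `D`.
-/

section Pseudoinverse

open Finset

variable {V : Type*} [Fintype V] [DecidableEq V]

theorem inv_add_smul_JMat_eq [Nonempty V] {L d : Matrix V V ℝ} {a : V → ℝ} {c : ℝ} (hc : c ≠ 0)
    (hL : ∀ x, ∑ z, L x z = 0) (hd : ∀ x y, d x y = d y x)
    (hLd : ∀ x y, ∑ z, L x z * d z y = a x - if x = y then c else 0) :
    (L + (Fintype.card V : ℝ)⁻¹ • JMat V)⁻¹ = of fun x y =>
      (Fintype.card V : ℝ)⁻¹ - (d x y - (∑ w, d x w) / Fintype.card V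
        - (∑ w, d y w) / Fintype.card V + (∑ z, ∑ w, d z w) / (Fintype.card V) ^ 2) / c := by
  set N : ℝ := (Fintype.card V : ℝ)
  have hN : N ≠ 0 := by positivity
  set D : V → ℝ := fun x => ∑ w, d x w
  set T : ℝ := ∑ z, D z
  set M : Matrix V V ℝ := of fun x y => N⁻¹ - (d x y - D x / N - D y / N + T / N ^ 2) / c
  have hLD (x : V) : ∑ z, L x z * D z = N * a x - c := by
    simp only [D, mul_sum]
    rw [sum_comm, sum_congr rfl fun w _ => hLd x w, sum_sub_distrib, sum_const,
      sum_ite_eq, if_pos (mem_univ x), card_univ, nsmul_eq_mul]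
  have hM (y : V) : ∑ z, M z y = 1 := by
    have hcol : ∑ z, d z y = D y := sum_congr rfl fun z _ => hd z y
    simp only [M, of_apply, sum_sub_distrib, ← sum_div, sum_add_distrib, hcol, sum_const,
      card_univ, nsmul_eq_mul]
    field_simp
    ring
  refine inv_eq_right_inv (ext fun x y => ?_)
  have hsummand (z : V) : (L + N⁻¹ • JMat V) x z * M z y =
      (N⁻¹ + D y / (N * c) - T / (N ^ 2 * c)) * L x z - c⁻¹ * (L x z * d z y)
        + (N * c)⁻¹ * (L x z * D z) + N⁻¹ * M z y := by
    simp only [Matrix.add_apply, Matrix.smul_apply, JMat, M, of_apply, smul_eq_mul]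
    field_simp
    ring
  rw [mul_apply, sum_congr rfl fun z _ => hsummand z]
  simp only [sum_add_distrib, sum_sub_distrib, ← mul_sum, hL, hLd, hLD, hM, one_apply]
  split_ifs <;> field_simp <;> ring

theorem glap_eq_lapMatrix (G : SimpleGraph V) [DecidableRel G.Adj] : glap G = G.lapMatrix ℝ := by
  unfold glap
  congr!

theorem gdag_apply_self_eq [Nonempty V] (G : SimpleGraph V) {d : Matrix V V ℝ} {a : V → ℝ} {c : ℝ}
    (hc : c ≠ 0) (hd : ∀ x y, d x y = d y x)
    (hLd : ∀ x y, ∑ z, glap G x z * d z y = a x - if x = y then c else 0) (x : V) :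
    gdag G x x = (2 * (∑ w, d x w) / Fintype.card V
      - (∑ z, ∑ w, d z w) / (Fintype.card V) ^ 2 - d x x) / c := by
  classical
  have hL (x : V) : ∑ z, glap G x z = 0 := by
    simpa [glap_eq_lapMatrix, mulVec, dotProduct] using
      congrFun (G.lapMatrix_mulVec_const_eq_zero (R := ℝ)) x
  rw [gdag, inv_add_smul_JMat_eq hc hL hd hLd]
  have hN : (Fintype.card V : ℝ) ≠ 0 := by positivity
  simp only [Matrix.sub_apply, of_apply, Matrix.smul_apply, JMat, smul_eq_mul]
  field_simp
  ring

end Pseudoinverse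

theorem Fintype.sum_add_eq_sum_of_add_ite {ι M : Type*} [Fintype ι] [DecidableEq ι]
    [AddCommMonoid M] {f F : ι → M} (i₀ : ι) (k : M)
    (h : ∀ i, f i + (if i = i₀ then k else 0) = F i) : ∑ i, f i + k = ∑ i, F i := by
  rw [← Finset.sum_congr rfl fun i _ => h i, Finset.sum_add_distrib, Finset.sum_ite_eq',
    if_pos (Finset.mem_univ _)]

section LevelWeight

def levelWeight (g : ℕ) (L : List ℕ) : ℕ := (L.map fun k => 4 ^ (g - k)).sum

variable {g : ℕ}

@[simp] theorem levelWeight_nil : levelWeight g [] = 0 := rfl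

@[simp] theorem levelWeight_cons (k : ℕ) (L : List ℕ) :
    levelWeight g (k :: L) = 4 ^ (g - k) + levelWeight g L := by
  simp [levelWeight]

@[simp] theorem levelWeight_append (L L' : List ℕ) :
    levelWeight g (L ++ L') = levelWeight g L + levelWeight g L' := by
  simp [levelWeight]

theorem levelWeight_succ {L : List ℕ} (hL : ∀ k ∈ L, k ≤ g) :
    levelWeight (g + 1) L = 4 * levelWeight g L := by
  rw [levelWeight, levelWeight, ← List.sum_map_mul_left]
  exact congrArg List.sum (List.map_congr_left fun k hk => by
    rw [Nat.sub_add_comm (hL k hk), pow_succ, mul_comm])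

theorem two_mul_four_pow_sub_le {a b : ℕ} (hba : b < a) (ha : a ≤ g) :
    2 * 4 ^ (g - a) ≤ 4 ^ (g - b) :=
  calc 2 * 4 ^ (g - a) ≤ 4 ^ (g - a + 1) := by rw [pow_succ]; omega
    _ ≤ 4 ^ (g - b) := Nat.pow_le_pow_right (by norm_num) (by omega)

theorem levelWeight_lt {a : ℕ} : ∀ {L : List ℕ}, L.Pairwise (· < ·) → (∀ k ∈ L, k ≤ g) →
    (∀ k ∈ L, a < k) → levelWeight g L < 4 ^ (g - a)
  | [], _, _, _ => by simp [levelWeight]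
  | k :: L, hL, hg, ha => by
    obtain ⟨hk, hL⟩ := List.pairwise_cons.mp hL
    have ih := levelWeight_lt (a := k) hL (fun m hm => hg m (List.mem_cons_of_mem k hm)) hk
    have := two_mul_four_pow_sub_le (g := g) (ha k List.mem_cons_self) (hg k List.mem_cons_self)
    rw [levelWeight_cons]
    omega

theorem levelWeight_lt_of_lex {Lx Ly : List ℕ} (hx : Lx.Pairwise (· < ·)) (hxg : ∀ k ∈ Lx, k ≤ g)
    (hlen : Lx.length = Ly.length) {z : ℕ} (hz : z < Lx.length)
    (hpre : ∀ l < z, Lx.getD l 0 = Ly.getD l 0) (hlt : Ly.getD z 0 < Lx.getD z 0) :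
    levelWeight g Lx < levelWeight g Ly := by
  have hzy : z < Ly.length := hlen ▸ hz
  rw [List.getD_eq_getElem _ _ hz, List.getD_eq_getElem _ _ hzy] at hlt
  have htake : Lx.take z = Ly.take z := List.ext_getElem (by simp; omega) fun l h₁ h₂ => by
    have hl : l < z := by simp at h₁; omega
    simpa [List.getD_eq_getElem, hl, show l < Lx.length by omega, show l < Ly.length by omega]
      using hpre l hl
  have hdrop := hx.sublist (List.drop_sublist z Lx)
  rw [List.drop_eq_getElem_cons hz, List.pairwise_cons] at hdrop
  have hrest := levelWeight_lt (g := g) hdrop.2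
    (fun k hk => hxg k (List.mem_of_mem_drop hk)) hdrop.1
  have hpow := two_mul_four_pow_sub_le hlt (hxg _ (List.getElem_mem hz))
  rw [← List.take_append_drop z Lx, ← List.take_append_drop z Ly, htake, levelWeight_append,
    levelWeight_append, List.drop_eq_getElem_cons hz, List.drop_eq_getElem_cons hzy,
    levelWeight_cons, levelWeight_cons]
  omega

end LevelWeight

section KochStructure

open Finset

variable {g : ℕ}

instance (g : ℕ) : DecidableRel (kochGraph g).Adj := fun x y =>
  decidable_of_iff _ (SimpleGraph.fromRel_adj _ x y).symm

/- `KochV (g + 1)` is a sum type only after unfolding: `Sum.inl x` has type `KochV g ⊕ _`, not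
`KochV (g + 1)`, which breaks rewriting and instance search. These maps give the old and new
vertices the right type. -/
def kochOld (x : KochV g) : KochV (g + 1) := .inl x

def kochNew (t : KochT g) (i : Fin 3) (a : Fin 2) : KochV (g + 1) := .inr (t, i, a)

@[simp] theorem kochOld_inj {x y : KochV g} : kochOld x = kochOld y ↔ x = y :=
  Sum.inl_injective.eq_iff

@[simp] theorem kochNew_inj {t t' : KochT g} {i i' : Fin 3} {a a' : Fin 2} :
    kochNew t i a = kochNew t' i' a' ↔ t = t' ∧ i = i' ∧ a = a' :=
  Sum.inr_injective.eq_iff.trans (by simp only [Prod.mk.injEq])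

@[simp] theorem kochOld_ne_kochNew {x : KochV g} {t : KochT g} {i : Fin 3} {a : Fin 2} :
    kochOld x ≠ kochNew t i a := Sum.inl_ne_inr

@[simp] theorem kochNew_ne_kochOld {x : KochV g} {t : KochT g} {i : Fin 3} {a : Fin 2} :
    kochNew t i a ≠ kochOld x := Sum.inr_ne_inl

theorem KochV.succ_cases {motive : KochV (g + 1) → Prop} (old : ∀ x, motive (kochOld x))
    (new : ∀ t i a, motive (kochNew t i a)) : ∀ v, motive v
  | .inl x => old x
  | .inr (t, i, a) => new t i a

@[simp] theorem kochCorner_succ_inl (t : KochT g) (c : Fin 3) :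
    kochCorner (g + 1) (.inl t) c = kochOld (kochCorner g t c) := rfl

@[simp] theorem kochCorner_succ_inr_zero (t : KochT g) (i : Fin 3) :
    kochCorner (g + 1) (.inr (t, i)) 0 = kochOld (kochCorner g t i) := rfl

@[simp] theorem kochCorner_succ_inr_one (t : KochT g) (i : Fin 3) :
    kochCorner (g + 1) (.inr (t, i)) 1 = kochNew t i 0 := rfl

@[simp] theorem kochCorner_succ_inr_two (t : KochT g) (i : Fin 3) :
    kochCorner (g + 1) (.inr (t, i)) 2 = kochNew t i 1 := rfl

theorem kochGraph_adj_iff (x y : KochV g) : (kochGraph g).Adj x y ↔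
    x ≠ y ∧ ∃ (t : KochT g) (c c' : Fin 3), c ≠ c' ∧ x = kochCorner g t c ∧ y = kochCorner g t c' := by
  rw [kochGraph, SimpleGraph.fromRel_adj]
  constructor
  · rintro ⟨hne, ⟨t, c, c', h⟩ | ⟨t, c, c', hcc', hy, hx⟩⟩
    · exact ⟨hne, t, c, c', h⟩
    · exact ⟨hne, t, c', c, hcc'.symm, hx, hy⟩
  · rintro ⟨hne, h⟩
    exact ⟨hne, Or.inl h⟩

theorem kochGraph_adj_old_old (x y : KochV g) :
    (kochGraph (g + 1)).Adj (kochOld x) (kochOld y) ↔ (kochGraph g).Adj x y := by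
  rw [kochGraph_adj_iff, kochGraph_adj_iff]
  constructor
  · rintro ⟨hne, t | ⟨t, i⟩, c, c', hcc', hx, hy⟩
    · simp only [kochCorner_succ_inl, kochOld_inj] at hx hy
      exact ⟨fun h => hne (h ▸ rfl), t, c, c', hcc', hx, hy⟩
    · fin_cases c <;> fin_cases c' <;> simp_all
  · rintro ⟨hne, t, c, c', hcc', rfl, rfl⟩
    exact ⟨by simpa using hne, .inl t, c, c', hcc', rfl, rfl⟩

theorem kochGraph_adj_old_new (x : KochV g) (t : KochT g) (i : Fin 3) (a : Fin 2) :
    (kochGraph (g + 1)).Adj (kochOld x) (kochNew t i a) ↔ x = kochCorner g t i := by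
  rw [kochGraph_adj_iff]
  constructor
  · rintro ⟨-, s | ⟨s, j⟩, c, c', hcc', hx, hy⟩
    · simp at hy
    · fin_cases c <;> fin_cases c' <;> simp_all
  · rintro rfl
    refine ⟨by simp, .inr (t, i), 0, a.succ, (Fin.succ_ne_zero a).symm, rfl, ?_⟩
    fin_cases a <;> rfl

theorem kochGraph_adj_new_new (t t' : KochT g) (i i' : Fin 3) (a a' : Fin 2) :
    (kochGraph (g + 1)).Adj (kochNew t i a) (kochNew t' i' a') ↔ t = t' ∧ i = i' ∧ a ≠ a' := by
  rw [kochGraph_adj_iff]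
  constructor
  · rintro ⟨hne, s | ⟨s, j⟩, c, c', hcc', hx, hy⟩
    · simp at hx
    · fin_cases c <;> fin_cases c' <;> simp_all
  · rintro ⟨rfl, rfl, ha⟩
    refine ⟨by simpa using ha, .inr (t, i), a.succ, a'.succ, by simpa using ha, ?_, ?_⟩ <;>
      fin_cases a <;> fin_cases a' <;> rfl

theorem kochGraph_adj_new_old (x : KochV g) (t : KochT g) (i : Fin 3) (a : Fin 2) :
    (kochGraph (g + 1)).Adj (kochNew t i a) (kochOld x) ↔ x = kochCorner g t i :=
  (SimpleGraph.adj_comm _ _ _).trans (kochGraph_adj_old_new x t i a)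

theorem card_kochT : ∀ g, Fintype.card (KochT g) = 4 ^ g
  | 0 => rfl
  | g + 1 => by
    rw [show Fintype.card (KochT (g + 1)) = _ + _ from Fintype.card_sum, Fintype.card_prod,
      Fintype.card_fin, card_kochT g]
    ring

theorem card_kochV : ∀ g, Fintype.card (KochV g) = 2 * 4 ^ g + 1
  | 0 => rfl
  | g + 1 => by
    rw [show Fintype.card (KochV (g + 1)) = _ + _ from Fintype.card_sum, Fintype.card_prod,
      Fintype.card_prod, Fintype.card_fin, Fintype.card_fin, card_kochV g, card_kochT g]
    ring

theorem sum_kochV_succ {M : Type*} [AddCommMonoid M] (f : KochV (g + 1) → M) :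
    ∑ v, f v = ∑ x, f (kochOld x) + ∑ q : KochT g × Fin 3, ∑ a, f (kochNew q.1 q.2 a) :=
  (Fintype.sum_sum_type f).trans (by simp only [Fintype.sum_prod_type]; rfl)

theorem sum_kochCorner_succ {M : Type*} [AddCommMonoid M] (f : KochV (g + 1) → M) :
    ∑ p : KochT (g + 1) × Fin 3, f (kochCorner (g + 1) p.1 p.2) =
      ∑ p : KochT g × Fin 3, f (kochOld (kochCorner g p.1 p.2))
        + ∑ q : KochT g × Fin 3,
            (f (kochOld (kochCorner g q.1 q.2)) + f (kochNew q.1 q.2 0) + f (kochNew q.1 q.2 1)) := by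
  rw [Fintype.sum_prod_type]
  refine (Fintype.sum_sum_type fun t => ∑ c, f (kochCorner (g + 1) t c)).trans ?_
  simp only [Fintype.sum_prod_type, Fin.sum_univ_three, kochCorner_succ_inl,
    kochCorner_succ_inr_zero, kochCorner_succ_inr_one, kochCorner_succ_inr_two]

def kochIncidences (g : ℕ) (x : KochV g) : Finset (KochT g × Fin 3) :=
  {q | kochCorner g q.1 q.2 = x}

@[simp] theorem mem_kochIncidences {x : KochV g} {q : KochT g × Fin 3} :
    q ∈ kochIncidences g x ↔ kochCorner g q.1 q.2 = x := by
  simp [kochIncidences]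

theorem card_kochIncidences_eq_sum (x : KochV g) :
    #(kochIncidences g x) = ∑ p : KochT g × Fin 3, if kochCorner g p.1 p.2 = x then 1 else 0 :=
  card_filter _ _

theorem card_kochIncidences_zero (x : KochV 0) : #(kochIncidences 0 x) = 1 := by
  revert x; decide

theorem card_kochIncidences_old (x : KochV g) :
    #(kochIncidences (g + 1) (kochOld x)) = 2 * #(kochIncidences g x) := by
  rw [card_kochIncidences_eq_sum, card_kochIncidences_eq_sum,
    sum_kochCorner_succ fun w => if w = kochOld x then 1 else 0]
  simp [two_mul]

theorem card_kochIncidences_new (t : KochT g) (i : Fin 3) (a : Fin 2) :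
    #(kochIncidences (g + 1) (kochNew t i a)) = 1 := by
  rw [card_kochIncidences_eq_sum, sum_kochCorner_succ fun w => if w = kochNew t i a then 1 else 0]
  have h (p : KochT g × Fin 3) : (p.1 = t ∧ p.2 = i) ↔ p = (t, i) := (Prod.ext_iff (y := (t, i))).symm
  fin_cases a <;> simp [h]

theorem sum_neighborFinset_old {M : Type*} [AddCommMonoid M] (x : KochV g)
    (f : KochV (g + 1) → M) :
    ∑ z ∈ (kochGraph (g + 1)).neighborFinset (kochOld x), f z =
      ∑ z ∈ (kochGraph g).neighborFinset x, f (kochOld z)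
        + ∑ q ∈ kochIncidences g x, ∑ a, f (kochNew q.1 q.2 a) := by
  simp only [SimpleGraph.neighborFinset_eq_filter, kochIncidences, sum_filter, sum_kochV_succ,
    kochGraph_adj_old_old, kochGraph_adj_old_new]
  congr 1
  exact sum_congr rfl fun q _ => by split_ifs <;> simp_all [eq_comm]

theorem sum_neighborFinset_new {M : Type*} [AddCommMonoid M] (t : KochT g) (i : Fin 3)
    (a : Fin 2) (f : KochV (g + 1) → M) :
    ∑ z ∈ (kochGraph (g + 1)).neighborFinset (kochNew t i a), f z =
      f (kochOld (kochCorner g t i)) + f (kochNew t i (a + 1)) := by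
  simp only [SimpleGraph.neighborFinset_eq_filter, sum_filter, sum_kochV_succ,
    kochGraph_adj_new_old, kochGraph_adj_new_new, sum_ite_eq', mem_univ, if_true]
  congr 1
  rw [Fintype.sum_eq_single (t, i), Fintype.sum_eq_single (a + 1)]
  · fin_cases a <;> simp
  · intro b hb
    fin_cases a <;> fin_cases b <;> simp_all
  · rintro ⟨s, j⟩ h
    refine sum_eq_zero fun b _ => if_neg ?_
    rintro ⟨rfl, rfl, -⟩
    exact h rfl

theorem kochGraph_degree_zero (x : KochV 0) : (kochGraph 0).degree x = 2 := by
  revert x; decide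

theorem kochGraph_degree_old (x : KochV g) :
    (kochGraph (g + 1)).degree (kochOld x) = (kochGraph g).degree x + 2 * #(kochIncidences g x) := by
  rw [← SimpleGraph.card_neighborFinset_eq_degree, card_eq_sum_ones, sum_neighborFinset_old,
    ← SimpleGraph.card_neighborFinset_eq_degree]
  simp [mul_comm]

theorem kochGraph_degree_new (t : KochT g) (i : Fin 3) (a : Fin 2) :
    (kochGraph (g + 1)).degree (kochNew t i a) = 2 := by
  rw [← SimpleGraph.card_neighborFinset_eq_degree, card_eq_sum_ones, sum_neighborFinset_new]

theorem kochGraph_degree : ∀ g (x : KochV g), (kochGraph g).degree x = 2 * #(kochIncidences g x)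
  | 0, x => by rw [kochGraph_degree_zero, card_kochIncidences_zero]
  | g + 1, x => by
    cases x using KochV.succ_cases with
    | old x => rw [kochGraph_degree_old, card_kochIncidences_old, kochGraph_degree g x]; ring
    | new t i a => rw [kochGraph_degree_new, card_kochIncidences_new]

end KochStructure

section KochDist

open Finset

variable {g : ℕ}

-- The graph distance of `K_g`, by its recursion along the construction; only the recursion is used.
def kochDist : ∀ g, KochV g → KochV g → ℕ
  | 0, x, y => if x = y then 0 else 1
  | _ + 1, .inl x, .inl y => kochDist _ x y
  | g + 1, .inl x, .inr (t, i, _) => kochDist g x (kochCorner g t i) + 1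
  | g + 1, .inr (t, i, _), .inl y => kochDist g (kochCorner g t i) y + 1
  | g + 1, .inr (t, i, a), .inr (t', i', a') =>
    if t = t' ∧ i = i' then (if a = a' then 0 else 1)
    else kochDist g (kochCorner g t i) (kochCorner g t' i') + 2

@[simp] theorem kochDist_old_old (x y : KochV g) :
    kochDist (g + 1) (kochOld x) (kochOld y) = kochDist g x y := rfl

@[simp] theorem kochDist_old_new (x : KochV g) (t : KochT g) (i : Fin 3) (a : Fin 2) :
    kochDist (g + 1) (kochOld x) (kochNew t i a) = kochDist g x (kochCorner g t i) + 1 := rfl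

@[simp] theorem kochDist_new_old (x : KochV g) (t : KochT g) (i : Fin 3) (a : Fin 2) :
    kochDist (g + 1) (kochNew t i a) (kochOld x) = kochDist g (kochCorner g t i) x + 1 := rfl

@[simp] theorem kochDist_new_new_self (t : KochT g) (i : Fin 3) (a a' : Fin 2) :
    kochDist (g + 1) (kochNew t i a) (kochNew t i a') = if a = a' then 0 else 1 := by
  simp [kochNew, kochDist]

theorem kochDist_new_new_of_ne {t t' : KochT g} {i i' : Fin 3} (h : ¬(t = t' ∧ i = i'))
    (a a' : Fin 2) : kochDist (g + 1) (kochNew t i a) (kochNew t' i' a') =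
      kochDist g (kochCorner g t i) (kochCorner g t' i') + 2 := by
  simp [kochNew, kochDist, h]

@[simp] theorem kochDist_self : ∀ g (x : KochV g), kochDist g x x = 0
  | 0, x => by simp [kochDist]
  | g + 1, x => by
    cases x using KochV.succ_cases with
    | old x => exact kochDist_self g x
    | new t i a => simp

theorem kochDist_comm : ∀ g (x y : KochV g), kochDist g x y = kochDist g y x
  | 0, x, y => by simp [kochDist, eq_comm]
  | g + 1, x, y => by
    cases x using KochV.succ_cases with
    | old x =>
      cases y using KochV.succ_cases with
      | old y => exact kochDist_comm g x y
      | new s j b => simp [kochDist_comm g x]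
    | new t i a =>
      cases y using KochV.succ_cases with
      | old y => simp [kochDist_comm g y]
      | new s j b =>
        by_cases h : t = s ∧ i = j
        · obtain ⟨rfl, rfl⟩ := h
          simp [eq_comm]
        · rw [kochDist_new_new_of_ne h, kochDist_new_new_of_ne (by tauto), kochDist_comm g]

theorem sum_kochIncidences_kochDist_new_old (x y : KochV g) :
    ∑ q ∈ kochIncidences g x, ∑ a, kochDist (g + 1) (kochNew q.1 q.2 a) (kochOld y)
      = #(kochIncidences g x) * (2 * (kochDist g x y + 1)) := by
  rw [card_eq_sum_ones, sum_mul]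
  exact sum_congr rfl fun q hq => by simp [mem_kochIncidences.mp hq, two_mul]

theorem sum_kochIncidences_kochDist_new_new (x : KochV g) (s : KochT g) (j : Fin 3) (b : Fin 2) :
    ∑ q ∈ kochIncidences g x, ∑ a, kochDist (g + 1) (kochNew q.1 q.2 a) (kochNew s j b)
      + (if x = kochCorner g s j then 3 else 0)
      = #(kochIncidences g x) * (2 * (kochDist g x (kochCorner g s j) + 2)) := by
  have hthree : (if x = kochCorner g s j then 3 else 0)
      = ∑ q ∈ kochIncidences g x, if q = (s, j) then 3 else 0 := by
    simp [eq_comm]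
  rw [hthree, ← sum_add_distrib, card_eq_sum_ones, sum_mul]
  refine sum_congr rfl fun ⟨t, i⟩ hq => ?_
  rw [mem_kochIncidences] at hq
  by_cases h : t = s ∧ i = j
  · obtain ⟨rfl, rfl⟩ := h
    rw [← hq]
    fin_cases b <;> simp
  · simp [kochDist_new_new_of_ne h, ← hq, Prod.ext_iff, h]

theorem sum_neighborFinset_kochDist_new (t : KochT g) (i : Fin 3) (a : Fin 2) (y : KochV (g + 1)) :
    ∑ z ∈ (kochGraph (g + 1)).neighborFinset (kochNew t i a), kochDist (g + 1) z y + 3 =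
      2 * (kochDist (g + 1) (kochNew t i a) y + 1) + if kochNew t i a = y then 3 else 0 := by
  rw [sum_neighborFinset_new]
  cases y using KochV.succ_cases with
  | old y => simp; ring
  | new s j b =>
    by_cases h : t = s ∧ i = j
    · obtain ⟨rfl, rfl⟩ := h
      fin_cases a <;> fin_cases b <;> simp
    · have hne : kochNew t i a ≠ kochNew s j b := fun e => h (by simp_all)
      simp only [kochDist_old_new, kochDist_new_new_of_ne h, if_neg hne]
      ring

theorem sum_neighborFinset_kochDist : ∀ g (x y : KochV g),
    ∑ z ∈ (kochGraph g).neighborFinset x, kochDist g z y + 3 =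
      (kochGraph g).degree x * (kochDist g x y + 1) + if x = y then 3 else 0
  | 0, x, y => by revert x y; decide
  | g + 1, x, y => by
    cases x using KochV.succ_cases with
    | new t i a => rw [kochGraph_degree_new]; exact sum_neighborFinset_kochDist_new t i a y
    | old x =>
      rw [sum_neighborFinset_old, kochGraph_degree_old]
      cases y using KochV.succ_cases with
      | old y =>
        have ih := sum_neighborFinset_kochDist g x y
        simp only [kochDist_old_old, kochOld_inj, sum_kochIncidences_kochDist_new_old]
        linarith
      | new s j b =>
        have ih := sum_neighborFinset_kochDist g x (kochCorner g s j)
        have hnew := sum_kochIncidences_kochDist_new_new x s j b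
        have hdeg := kochGraph_degree g x
        simp only [kochDist_old_new, sum_add_distrib, sum_const,
          SimpleGraph.card_neighborFinset_eq_degree, smul_eq_mul, mul_one, if_neg kochOld_ne_kochNew]
        split_ifs at ih hnew <;> nlinarith

end KochDist

section KochDistSum

open Finset

variable {g : ℕ}

def kochDistSum (g : ℕ) (x : KochV g) : ℕ := ∑ y, kochDist g x y

def kochCornerDistSum (g : ℕ) (x : KochV g) : ℕ :=
  ∑ p : KochT g × Fin 3, kochDist g x (kochCorner g p.1 p.2)

theorem card_kochT_prod_fin_three (g : ℕ) : Fintype.card (KochT g × Fin 3) = 3 * 4 ^ g := by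
  rw [Fintype.card_prod, card_kochT, Fintype.card_fin, mul_comm]

theorem kochCornerDistSum_old (x : KochV g) :
    kochCornerDistSum (g + 1) (kochOld x) = 4 * kochCornerDistSum g x + 6 * 4 ^ g := by
  simp only [kochCornerDistSum, sum_kochCorner_succ, kochDist_old_old, kochDist_old_new,
    sum_add_distrib, sum_const, card_univ, card_kochT_prod_fin_three, smul_eq_mul]
  ring

theorem kochCornerDistSum_new (t : KochT g) (i : Fin 3) (a : Fin 2) :
    kochCornerDistSum (g + 1) (kochNew t i a) + 3
      = 4 * kochCornerDistSum g (kochCorner g t i) + 18 * 4 ^ g := by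
  have hnew : ∑ q : KochT g × Fin 3, (kochDist (g + 1) (kochNew t i a) (kochOld (kochCorner g q.1 q.2))
      + kochDist (g + 1) (kochNew t i a) (kochNew q.1 q.2 0)
      + kochDist (g + 1) (kochNew t i a) (kochNew q.1 q.2 1)) + 3
        = ∑ q : KochT g × Fin 3, (3 * kochDist g (kochCorner g t i) (kochCorner g q.1 q.2) + 5) := by
    refine Fintype.sum_add_eq_sum_of_add_ite (t, i) 3 fun ⟨s, j⟩ => ?_
    by_cases h : t = s ∧ i = j
    · obtain ⟨rfl, rfl⟩ := h
      fin_cases a <;> simp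
    · simp [kochDist_new_new_of_ne h, Prod.ext_iff, Ne.symm, h]
      ring
  rw [kochCornerDistSum, sum_kochCorner_succ, add_assoc, hnew]
  simp only [kochCornerDistSum, kochDist_new_old, sum_add_distrib, ← mul_sum, sum_const, card_univ,
    card_kochT_prod_fin_three, smul_eq_mul]
  ring

theorem kochDistSum_old (x : KochV g) :
    kochDistSum (g + 1) (kochOld x) = kochDistSum g x + 2 * kochCornerDistSum g x + 6 * 4 ^ g := by
  simp only [kochDistSum, kochCornerDistSum, sum_kochV_succ, kochDist_old_old, kochDist_old_new,
    sum_add_distrib, ← mul_sum, sum_const, card_univ, card_kochT_prod_fin_three,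
    Fintype.card_fin, smul_eq_mul]
  ring

theorem kochDistSum_new (t : KochT g) (i : Fin 3) (a : Fin 2) :
    kochDistSum (g + 1) (kochNew t i a) + 2
      = kochDistSum g (kochCorner g t i) + 2 * kochCornerDistSum g (kochCorner g t i) + 14 * 4 ^ g := by
  have hnew : ∑ q : KochT g × Fin 3, ∑ b, kochDist (g + 1) (kochNew t i a) (kochNew q.1 q.2 b) + 3
      = ∑ q : KochT g × Fin 3, (2 * kochDist g (kochCorner g t i) (kochCorner g q.1 q.2) + 4) := by
    refine Fintype.sum_add_eq_sum_of_add_ite (t, i) 3 fun ⟨s, j⟩ => ?_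
    by_cases h : t = s ∧ i = j
    · obtain ⟨rfl, rfl⟩ := h
      fin_cases a <;> simp
    · simp [kochDist_new_new_of_ne h, Prod.ext_iff, Ne.symm, h]
      ring
  have hold : ∑ y, kochDist (g + 1) (kochNew t i a) (kochOld y)
      = kochDistSum g (kochCorner g t i) + (2 * 4 ^ g + 1) := by
    simp [kochDistSum, sum_add_distrib, card_kochV]
  have hsum : ∑ q : KochT g × Fin 3, (2 * kochDist g (kochCorner g t i) (kochCorner g q.1 q.2) + 4)
      = 2 * kochCornerDistSum g (kochCorner g t i) + 12 * 4 ^ g := by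
    simp only [kochCornerDistSum, sum_add_distrib, ← mul_sum, sum_const, card_univ,
      card_kochT_prod_fin_three, smul_eq_mul]
    ring
  rw [kochDistSum, sum_kochV_succ]
  omega

theorem kochCornerDistSum_eq : ∀ g (x : KochV g),
    2 * kochCornerDistSum g x + 2 * 4 ^ g = 3 * kochDistSum g x
  | 0, x => by revert x; decide
  | g + 1, x => by
    cases x using KochV.succ_cases with
    | old x =>
      have := kochCornerDistSum_eq g x
      rw [kochCornerDistSum_old, kochDistSum_old, pow_succ]
      omega
    | new t i a =>
      have := kochCornerDistSum_eq g (kochCorner g t i)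
      have := kochCornerDistSum_new t i a
      have := kochDistSum_new t i a
      rw [pow_succ]
      omega

theorem kochDistSum_old_eq (x : KochV g) :
    kochDistSum (g + 1) (kochOld x) = 4 * kochDistSum g x + 4 * 4 ^ g := by
  have := kochCornerDistSum_eq g x
  rw [kochDistSum_old]
  omega

theorem kochDistSum_new_eq (t : KochT g) (i : Fin 3) (a : Fin 2) :
    kochDistSum (g + 1) (kochNew t i a) + 2 = 4 * kochDistSum g (kochCorner g t i) + 12 * 4 ^ g := by
  have := kochCornerDistSum_eq g (kochCorner g t i)
  rw [kochDistSum_new]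
  omega

end KochDistSum

section KochLabel

variable {g : ℕ}

@[simp] theorem kochLabel_old (x : KochV g) : kochLabel (g + 1) (kochOld x) = kochLabel g x := rfl

@[simp] theorem kochLabel_new (t : KochT g) (i : Fin 3) (a : Fin 2) :
    kochLabel (g + 1) (kochNew t i a) = kochLabel g (kochCorner g t i) ++ [g + 1] := rfl

theorem kochLabel_le : ∀ g (x : KochV g), ∀ k ∈ kochLabel g x, k ≤ g
  | 0, x => by simp [kochLabel]
  | g + 1, x => by
    cases x using KochV.succ_cases with
    | old x => exact fun k hk => (kochLabel_le g x k hk).trans g.le_succ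
    | new t i a =>
      simp only [kochLabel_new, List.mem_append, List.mem_singleton]
      rintro k (hk | rfl)
      exacts [(kochLabel_le g _ k hk).trans g.le_succ, le_rfl]

theorem kochLabel_pairwise : ∀ g (x : KochV g), (kochLabel g x).Pairwise (· < ·)
  | 0, x => by simp [kochLabel]
  | g + 1, x => by
    cases x using KochV.succ_cases with
    | old x => exact kochLabel_pairwise g x
    | new t i a =>
      rw [kochLabel_new, List.pairwise_append]
      refine ⟨kochLabel_pairwise g _, List.pairwise_singleton _ _, fun k hk m hm => ?_⟩
      rw [List.mem_singleton.mp hm]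
      exact Nat.lt_succ_of_le (kochLabel_le g _ k hk)

theorem kochLabel_eq_cons : ∀ g (x : KochV g), ∃ L, kochLabel g x = 0 :: L
  | 0, x => ⟨[], rfl⟩
  | g + 1, x => by
    cases x using KochV.succ_cases with
    | old x => exact kochLabel_eq_cons g x
    | new t i a =>
      obtain ⟨L, hL⟩ := kochLabel_eq_cons g (kochCorner g t i)
      exact ⟨L ++ [g + 1], by simp [hL]⟩

theorem kochDistSum_add_levelWeight : ∀ g (x : KochV g),
    kochDistSum g x + 2 * levelWeight g (kochLabel g x) = (g + 2 + 2 * (kochLabel g x).length) * 4 ^ g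
  | 0, x => by revert x; decide
  | g + 1, x => by
    cases x using KochV.succ_cases with
    | old x =>
      have ih := kochDistSum_add_levelWeight g x
      rw [kochDistSum_old_eq, kochLabel_old, levelWeight_succ (kochLabel_le g x), pow_succ]
      nlinarith
    | new t i a =>
      have ih := kochDistSum_add_levelWeight g (kochCorner g t i)
      have := kochDistSum_new_eq t i a
      rw [kochLabel_new, levelWeight_append, levelWeight_succ (kochLabel_le g _), List.length_append,
        pow_succ]
      simp only [levelWeight_cons, levelWeight_nil, Nat.sub_self, pow_zero,
        List.length_singleton]
      nlinarith

theorem kochDistSum_lt_of_length_lt {x y : KochV g}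
    (h : (kochLabel g y).length < (kochLabel g x).length) : kochDistSum g y < kochDistSum g x := by
  have hx := kochDistSum_add_levelWeight g x
  have hy := kochDistSum_add_levelWeight g y
  obtain ⟨Lx, hLx⟩ := kochLabel_eq_cons g x
  obtain ⟨Ly, hLy⟩ := kochLabel_eq_cons g y
  have hpx := kochLabel_pairwise g x
  have hgx := kochLabel_le g x
  rw [hLx, List.pairwise_cons] at hpx
  rw [hLx] at hgx
  have hwx := levelWeight_lt (g := g) hpx.2 (fun k hk => hgx k (List.mem_cons_of_mem 0 hk)) hpx.1
  simp only [hLx, hLy, levelWeight_cons, List.length_cons, Nat.sub_zero] at hx hy h hwx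
  have hmul : (g + 2 + 2 * (Ly.length + 1) + 2) * 4 ^ g ≤ (g + 2 + 2 * (Lx.length + 1)) * 4 ^ g :=
    Nat.mul_le_mul_right _ (by omega)
  nlinarith

theorem kochDistSum_lt_of_lex {x y : KochV g}
    (hlen : (kochLabel g x).length = (kochLabel g y).length) {z : ℕ} (hz : z < (kochLabel g x).length)
    (hpre : ∀ l < z, (kochLabel g x).getD l 0 = (kochLabel g y).getD l 0)
    (hlt : (kochLabel g y).getD z 0 < (kochLabel g x).getD z 0) :
    kochDistSum g y < kochDistSum g x := by
  have hx := kochDistSum_add_levelWeight g x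
  have hy := kochDistSum_add_levelWeight g y
  have := levelWeight_lt_of_lex (g := g) (kochLabel_pairwise g x) (kochLabel_le g x) hlen hz hpre hlt
  rw [hlen] at hx
  omega

theorem kochDistSum_eq_of_kochLabel_eq {x y : KochV g} (h : kochLabel g x = kochLabel g y) :
    kochDistSum g x = kochDistSum g y := by
  have hx := kochDistSum_add_levelWeight g x
  have hy := kochDistSum_add_levelWeight g y
  rw [h] at hx
  omega

end KochLabel

section KochPseudoinverse

variable {g : ℕ}

theorem sum_glap_kochGraph_mul_kochDist (x y : KochV g) :
    ∑ z, glap (kochGraph g) x z * kochDist g z y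
      = (3 - (kochGraph g).degree x) - if x = y then 3 else 0 := by
  have h := sum_neighborFinset_kochDist g x y
  have hL := (kochGraph g).lapMatrix_mulVec_apply (R := ℝ) x fun z => (kochDist g z y : ℝ)
  rw [glap_eq_lapMatrix]
  change (_ *ᵥ _) x = _
  rw [hL]
  apply_fun ((↑) : ℕ → ℝ) at h
  push_cast at h
  split_ifs at h ⊢ <;> linarith

theorem gdag_kochGraph_apply_self (x : KochV g) :
    gdag (kochGraph g) x x = (2 * kochDistSum g x / (2 * 4 ^ g + 1)
      - (∑ z, (kochDistSum g z : ℝ)) / (2 * 4 ^ g + 1) ^ 2) / 3 := by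
  have : Nonempty (KochV g) := Fintype.card_pos_iff.mp (by rw [card_kochV]; positivity)
  rw [gdag_apply_self_eq (kochGraph g) (d := fun x y => (kochDist g x y : ℝ)) three_ne_zero
    (fun x y => by rw [kochDist_comm]) sum_glap_kochGraph_mul_kochDist x]
  simp [kochDistSum, card_kochV]

theorem gdag_kochGraph_lt_iff {x y : KochV g} :
    gdag (kochGraph g) x x < gdag (kochGraph g) y y ↔ kochDistSum g x < kochDistSum g y := by
  rw [gdag_kochGraph_apply_self, gdag_kochGraph_apply_self, div_lt_div_iff_of_pos_right three_pos,
    sub_lt_sub_iff_right, div_lt_div_iff_of_pos_right (by positivity), mul_lt_mul_iff_right₀ two_pos,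
    Nat.cast_lt]

end KochPseudoinverse

theorem stmt_15_general (g : ℕ) (x y : KochV g) :
    ((kochLabel g x).length > (kochLabel g y).length →
      gdag (kochGraph g) x x > gdag (kochGraph g) y y) ∧
    ((kochLabel g x).length < (kochLabel g y).length →
      gdag (kochGraph g) x x < gdag (kochGraph g) y y) ∧
    ((kochLabel g x).length = (kochLabel g y).length →
      ∀ z < (kochLabel g x).length,
        (∀ l < z, (kochLabel g x).getD l 0 = (kochLabel g y).getD l 0) →
        (kochLabel g x).getD z 0 ≠ (kochLabel g y).getD z 0 →
        (((kochLabel g x).getD z 0 > (kochLabel g y).getD z 0 →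
            gdag (kochGraph g) x x > gdag (kochGraph g) y y) ∧
         ((kochLabel g x).getD z 0 < (kochLabel g y).getD z 0 →
            gdag (kochGraph g) x x < gdag (kochGraph g) y y))) ∧
    (kochLabel g x = kochLabel g y →
      gdag (kochGraph g) x x = gdag (kochGraph g) y y) := by
  refine ⟨fun h => gdag_kochGraph_lt_iff.mpr (kochDistSum_lt_of_length_lt h),
    fun h => gdag_kochGraph_lt_iff.mpr (kochDistSum_lt_of_length_lt h),
    fun hlen z hz hpre _ => ⟨fun h => gdag_kochGraph_lt_iff.mpr (kochDistSum_lt_of_lex hlen hz hpre h),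
      fun h => gdag_kochGraph_lt_iff.mpr (kochDistSum_lt_of_lex hlen.symm (hlen ▸ hz)
        (fun l hl => (hpre l hl).symm) h)⟩,
    fun h => ?_⟩
  rw [gdag_kochGraph_apply_self, gdag_kochGraph_apply_self, kochDistSum_eq_of_kochLabel_eq h]

/-- Comparison of the diagonal entries of the pseudoinverse `L†(g)` of the Laplacian
of the Koch network `K_g` for two different nodes `x`, `y` with labels
`{i_0, …, i_{n_i}}` and `{j_0, …, j_{n_j}}` (so the label lists have lengths
`n_i + 1` and `n_j + 1`):
(1) if `n_i > n_j` then `L†_{xx} > L†_{yy}`;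
(2) if `n_i < n_j` then `L†_{xx} < L†_{yy}`;
(3) if `n_i = n_j` and the labels first differ at position `z`, then
    `L†_{xx} > L†_{yy}` when `i_z > j_z` and `L†_{xx} < L†_{yy}` when `i_z < j_z`;
(4) if the labels coincide, then `L†_{xx} = L†_{yy}`. -/
theorem stmt_15 (g : ℕ) (x y : KochV g) (hxy : x ≠ y) :
    ((kochLabel g x).length > (kochLabel g y).length →
      gdag (kochGraph g) x x > gdag (kochGraph g) y y) ∧
    ((kochLabel g x).length < (kochLabel g y).length →
      gdag (kochGraph g) x x < gdag (kochGraph g) y y) ∧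
    ((kochLabel g x).length = (kochLabel g y).length →
      ∀ z < (kochLabel g x).length,
        (∀ l < z, (kochLabel g x).getD l 0 = (kochLabel g y).getD l 0) →
        (kochLabel g x).getD z 0 ≠ (kochLabel g y).getD z 0 →
        (((kochLabel g x).getD z 0 > (kochLabel g y).getD z 0 →
            gdag (kochGraph g) x x > gdag (kochGraph g) y y) ∧
         ((kochLabel g x).getD z 0 < (kochLabel g y).getD z 0 →
            gdag (kochGraph g) x x < gdag (kochGraph g) y y))) ∧
    (kochLabel g x = kochLabel g y →
      gdag (kochGraph g) x x = gdag (kochGraph g) y y) :=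
  stmt_15_general g x y
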